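/- arXiv:1801.01699 — 2 statements merged into one kernel-verified Lean document; each statement's English description precedes it below -/
import Mathlib

section
/- Let A be a finite set, P a probability distribution on a finite set X with support contained in A's ambient set, let M ≥ 1 be an integer, c ≥ P(A) a real constant, and suppose P(x) ≤ c·δ/M for all x ∈ A, where 0 < δ < 1. Then there exists a function φ: A → {1,...,M} such that (1/2)·Σ_{i=1}^{M} |P(φ⁻¹(i)) − c/M| ≤ c·δ + (1/2)(c − P(A)). -/
/-!
Fill `Fin M` bins greedily, putting each element of `A` into a currently lightest bin. That bin
weighs at most the average `P(A)/M ≤ c/M` before the element is added, so every bin ends up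
with mass at most `c/M + cδ/M`. A deviation `y ≤ μ` with `μ ≥ 0` satisfies `|y| ≤ 2μ - y`, and
summing this over the bins, where the deviations `P(φ⁻¹(i)) - c/M` add up to `P(A) - c`, gives
the bound.
-/

open Finset

lemma exists_card_mul_sum_fiber_le {X ι : Type*} [Fintype ι] [Nonempty ι] [DecidableEq ι]
    (p : X → ℝ) (A : Finset X) (φ : X → ι) :
    ∃ i, (Fintype.card ι : ℝ) * ∑ x ∈ A with φ x = i, p x ≤ ∑ x ∈ A, p x := by
  obtain ⟨i, -, hi⟩ := univ.exists_min_image (fun i => ∑ x ∈ A with φ x = i, p x) univ_nonempty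
  refine ⟨i, ?_⟩
  rw [← sum_fiberwise A φ p, ← nsmul_eq_mul, ← card_univ]
  exact card_nsmul_le_sum _ _ _ fun j _ => hi j (mem_univ j)

lemma sum_fiber_update_insert {X ι : Type*} [DecidableEq X] [DecidableEq ι]
    (p : X → ℝ) {A : Finset X} {a : X} (ha : a ∉ A) (φ : X → ι) (i₀ i : ι) :
    ∑ x ∈ insert a A with Function.update φ a i₀ x = i, p x
      = (if i₀ = i then p a else 0) + ∑ x ∈ A with φ x = i, p x := by
  have hA : ∀ x ∈ A, Function.update φ a i₀ x = φ x := fun x hx =>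
    Function.update_of_ne (ne_of_mem_of_not_mem hx ha) _ _
  rw [filter_insert, Function.update_self, filter_congr fun x hx => by rw [hA x hx]]
  split_ifs with h
  · rw [sum_insert fun h' => ha (mem_filter.mp h').1]
  · rw [zero_add]

theorem exists_sum_fiber_le {X ι : Type*} [Fintype ι] [Nonempty ι] [DecidableEq ι]
    (p : X → ℝ) (A : Finset X) {w μ : ℝ} (hμ : 0 ≤ μ) (hp0 : ∀ x ∈ A, 0 ≤ p x)
    (hpμ : ∀ x ∈ A, p x ≤ μ) (hA : ∑ x ∈ A, p x ≤ Fintype.card ι * w) :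
    ∃ φ : X → ι, ∀ i, ∑ x ∈ A with φ x = i, p x ≤ w + μ := by
  classical
  have hι : (0 : ℝ) < Fintype.card ι := by exact_mod_cast Fintype.card_pos
  induction A using Finset.induction_on with
  | empty =>
    have hw : 0 ≤ w := nonneg_of_mul_nonneg_right (by simpa using hA) hι
    exact ⟨fun _ => Classical.arbitrary ι, fun i => by simp only [filter_empty, sum_empty]; linarith⟩
  | insert a A ha ih =>
    rw [sum_insert ha] at hA
    have hpa : 0 ≤ p a := hp0 a (mem_insert_self a A)
    obtain ⟨φ, hφ⟩ := ih (fun x hx => hp0 x (mem_insert_of_mem hx))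
      (fun x hx => hpμ x (mem_insert_of_mem hx)) (by linarith)
    obtain ⟨i₀, hi₀⟩ := exists_card_mul_sum_fiber_le p A φ
    have hlight : ∑ x ∈ A with φ x = i₀, p x ≤ w :=
      le_of_mul_le_mul_left (by linarith) hι
    refine ⟨Function.update φ a i₀, fun i => ?_⟩
    rw [sum_fiber_update_insert p ha]
    split_ifs with h
    · subst h
      linarith [hpμ a (mem_insert_self a A)]
    · simpa using hφ i

lemma abs_le_two_mul_sub_of_le {y μ : ℝ} (hμ : 0 ≤ μ) (hy : y ≤ μ) : |y| ≤ 2 * μ - y :=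
  abs_le.mpr ⟨by linarith, by linarith⟩

theorem stmt_0_general {X : Type*} [Fintype X] (P : X → ℝ) (A : Finset X)
    (hP0 : ∀ x, 0 ≤ P x)
    (M : ℕ) (hM : 1 ≤ M) (c δ : ℝ) (hδ0 : 0 < δ)
    (hc : ∑ x ∈ A, P x ≤ c)
    (hbd : ∀ x ∈ A, P x ≤ c * δ / M) :
    ∃ φ : X → Fin M,
      (1 / 2) * ∑ i : Fin M,
          |(∑ x ∈ A.filter (fun x => φ x = i), P x) - c / M|
        ≤ c * δ + (1 / 2) * (c - ∑ x ∈ A, P x) := by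
  have : NeZero M := ⟨by omega⟩
  have hMpos : (0 : ℝ) < M := by exact_mod_cast hM
  have hμ : 0 ≤ c * δ / M :=
    div_nonneg (mul_nonneg ((sum_nonneg fun x _ => hP0 x).trans hc) hδ0.le) hMpos.le
  obtain ⟨φ, hφ⟩ := exists_sum_fiber_le P A (w := c / M) hμ (fun x _ => hP0 x) hbd
    (by rwa [Fintype.card_fin, mul_div_cancel₀ c hMpos.ne'])
  refine ⟨φ, ?_⟩
  calc (1 / 2) * ∑ i : Fin M, |(∑ x ∈ A with φ x = i, P x) - c / M|
      ≤ (1 / 2) * ∑ i : Fin M, (2 * (c * δ / M) - ((∑ x ∈ A with φ x = i, P x) - c / M)) := by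
        gcongr with i
        exact abs_le_two_mul_sub_of_le hμ (by linarith [hφ i])
    _ = c * δ + (1 / 2) * (c - ∑ x ∈ A, P x) := by
        rw [sum_sub_distrib, sum_sub_distrib, sum_fiberwise]
        simp only [sum_const, card_univ, Fintype.card_fin, nsmul_eq_mul]
        field_simp
        ring

/-- Lemma 1 of the paper: existence of a mapping into `Fin M` whose pushforward of `P`
restricted to `A` is close to the scaled uniform distribution. -/
theorem stmt_0 {X : Type*} [Fintype X] (P : X → ℝ) (A : Finset X)
    (hP0 : ∀ x, 0 ≤ P x) (hP1 : ∑ x, P x = 1)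
    (M : ℕ) (hM : 1 ≤ M) (c δ : ℝ) (hδ0 : 0 < δ) (hδ1 : δ < 1)
    (hc : ∑ x ∈ A, P x ≤ c)
    (hbd : ∀ x ∈ A, P x ≤ c * δ / M) :
    ∃ φ : X → Fin M,
      (1 / 2) * ∑ i : Fin M,
          |(∑ x ∈ A.filter (fun x => φ x = i), P x) - c / M|
        ≤ c * δ + (1 / 2) * (c - ∑ x ∈ A, P x) :=
  stmt_0_general P A hP0 M hM c δ hδ0 hc hbd
end

section
/- Let P be a probability distribution on a finite set X, let Q be a sub-probability distribution on X with Q(x) ≤ P(x) for all x, and suppose for a function φ: X → ⋃_m U^m (U a finite alphabet of size K) that Q(x) ≤ P(D_m)/K^m whenever φ(x) has length m, where D_m = {x : |φ(x)| = m}. Then Σ_x P(x)·log_K(1/Q(x)) ≥ Σ_x P(x)·|φ(x)|, i.e., the expected length is at most the P-expectation of the Q-information. -/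
theorem Real.natCast_le_logb_one_div_of_le_one_div_pow {b q : ℝ} {n : ℕ} (hb : 1 < b)
    (hq : 0 < q) (h : q ≤ 1 / b ^ n) : (n : ℝ) ≤ Real.logb b (1 / q) := by
  have hbn : 0 < b ^ n := pow_pos (zero_lt_one.trans hb) n
  rw [Real.le_logb_iff_rpow_le hb (one_div_pos.mpr hq), Real.rpow_natCast]
  exact (le_one_div hq hbn).mp h

theorem stmt_5_general {X : Type*} [Fintype X] (P Q : X → ℝ) (K : ℕ) (hK : 2 ≤ K)
    (hP0 : ∀ x, 0 ≤ P x) (hP1 : ∑ x, P x = 1)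
    (hQpos : ∀ x, 0 < P x → 0 < Q x)
    (ℓ : X → ℕ)
    (hcond : ∀ x, Q x ≤ (∑ y ∈ Finset.univ.filter (fun y => ℓ y = ℓ x), P y)
        / (K : ℝ) ^ (ℓ x)) :
    ∑ x, P x * (ℓ x : ℝ) ≤ ∑ x, P x * Real.logb K (1 / Q x) := by
  have hK1 : (1 : ℝ) < K := by exact_mod_cast hK
  refine Finset.sum_le_sum fun x _ => ?_
  obtain hPx | hPx := (hP0 x).eq_or_lt
  · simp [← hPx]
  have hlevel_le_one : ∑ y ∈ Finset.univ.filter (fun y => ℓ y = ℓ x), P y ≤ 1 :=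
    hP1 ▸ Finset.sum_le_univ_sum_of_nonneg hP0
  have hQx : Q x ≤ 1 / (K : ℝ) ^ ℓ x :=
    (hcond x).trans (by gcongr)
  exact mul_le_mul_of_nonneg_left
    (Real.natCast_le_logb_one_div_of_le_one_div_pow hK1 (hQpos x hPx) hQx) hPx.le

/-- Converse core inequality: if `Q(x) ≤ P(D_{|φ(x)|})/K^{|φ(x)|}` for all `x`, then the
expected length is at most the `P`-expectation of the `Q`-information. -/
theorem stmt_5 {X : Type*} [Fintype X] (P Q : X → ℝ) (K : ℕ) (hK : 2 ≤ K)
    (hP0 : ∀ x, 0 ≤ P x) (hP1 : ∑ x, P x = 1)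
    (hQpos : ∀ x, 0 < P x → 0 < Q x) (hQle : ∀ x, Q x ≤ P x)
    (ℓ : X → ℕ)
    (hcond : ∀ x, Q x ≤ (∑ y ∈ Finset.univ.filter (fun y => ℓ y = ℓ x), P y)
        / (K : ℝ) ^ (ℓ x)) :
    ∑ x, P x * (ℓ x : ℝ) ≤ ∑ x, P x * Real.logb K (1 / Q x) :=
  stmt_5_general P Q K hK hP0 hP1 hQpos ℓ hcond
end
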